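/- arXiv:1012.2682 — 5 statements merged into one kernel-verified Lean document; each statement's English description precedes it below -/
import Mathlib

section
/- Let Γ be a unimodular non-degenerate even lattice and L a non-degenerate primitive sublattice of Γ. If G is a group of automorphisms of Γ preserving L whose action on the orthogonal complement L^⊥ in Γ is trivial, then the induced action of G on the discriminant group A(L) = L^∨/L is trivial. -/
open Matrix

/-- The bilinear form on `ℚⁿ` associated to an integer Gram matrix `M`. -/
noncomputable def ratForm {n : ℕ} (M : Matrix (Fin n) (Fin n) ℤ)
    (x y : Fin n → ℚ) : ℚ :=
  dotProduct x ((M.map (Int.cast : ℤ → ℚ)).mulVec y)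

/-- The lattice `ℤⁿ ⊆ ℚⁿ`. -/
def intVecs (n : ℕ) : Set (Fin n → ℚ) := {x | ∀ i, ∃ a : ℤ, (a : ℚ) = x i}

/-- Coordinatewise cast `ℤⁿ → ℚⁿ` as a `ℤ`-linear map. -/
def castMap (n : ℕ) : (Fin n → ℤ) →ₗ[ℤ] (Fin n → ℚ) where
  toFun z := fun i => (z i : ℚ)
  map_add' z w := by funext i; simp [Pi.add_apply]
  map_smul' k z := by funext i; simp [Pi.smul_apply, zsmul_eq_mul]

lemma castMap_mem_intVecs {n : ℕ} (z : Fin n → ℤ) : castMap n z ∈ intVecs n :=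
  fun i => ⟨z i, rfl⟩

lemma intVecs_sub {n : ℕ} {a b : Fin n → ℚ} (ha : a ∈ intVecs n) (hb : b ∈ intVecs n) :
    a - b ∈ intVecs n := by
  intro i
  obtain ⟨za, hza⟩ := ha i
  obtain ⟨zb, hzb⟩ := hb i
  exact ⟨za - zb, by simp [Pi.sub_apply, ← hza, ← hzb]⟩

lemma intVecs_smul {n : ℕ} {a : Fin n → ℚ} (k : ℤ) (ha : a ∈ intVecs n) :
    (k : ℚ) • a ∈ intVecs n := by
  intro i
  obtain ⟨za, hza⟩ := ha i
  exact ⟨k * za, by simp [Pi.smul_apply, ← hza]⟩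

/-- Dot product with a fixed vector, as a `ℤ`-linear map on `ℚⁿ`. -/
def dlin {n : ℕ} (c : Fin n → ℚ) : (Fin n → ℚ) →ₗ[ℤ] ℚ where
  toFun y := dotProduct c y
  map_add' y z := dotProduct_add c y z
  map_smul' k y := by
    simp only [RingHom.id_apply]
    rw [← Int.cast_smul_eq_zsmul ℚ k y, ← Int.cast_smul_eq_zsmul ℚ k (dotProduct c y),
      dotProduct_smul]

/-- Main extension lemma: a rational functional which is integral on a primitive
sublattice `L` agrees on `L` with an integral vector. -/
lemma exists_integral_dual {n : ℕ} (L : Submodule ℤ (Fin n → ℚ))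
    (hLΓ : (L : Set (Fin n → ℚ)) ⊆ intVecs n)
    (hLprim : ∀ x ∈ intVecs n, (∃ k : ℤ, k ≠ 0 ∧ (k : ℤ) • x ∈ L) → x ∈ L)
    (c : Fin n → ℚ) (hc : ∀ y ∈ L, ∃ a : ℤ, (a : ℚ) = dotProduct c y) :
    ∃ c' : Fin n → ℚ, c' ∈ intVecs n ∧ ∀ y ∈ L, dotProduct c' y = dotProduct c y := by
  classical
  set φ := castMap n with hφ
  set N : Submodule ℤ (Fin n → ℤ) := L.comap φ with hN
  have hmemN : ∀ m : Fin n → ℤ, m ∈ N ↔ φ m ∈ L := fun m => Submodule.mem_comap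
  -- the quotient is torsion-free, hence free, hence projective
  haveI : NoZeroSMulDivisors ℤ ((Fin n → ℤ) ⧸ N) := by
    constructor
    intro k q hkq
    by_cases hk : k = 0
    · exact Or.inl hk
    · right
      obtain ⟨z, rfl⟩ := N.mkQ_surjective q
      rw [← _root_.map_smul, Submodule.mkQ_apply, Submodule.Quotient.mk_eq_zero] at hkq
      rw [Submodule.mkQ_apply, Submodule.Quotient.mk_eq_zero]
      rw [hmemN]
      apply hLprim (φ z) (castMap_mem_intVecs z)
      refine ⟨k, hk, ?_⟩
      have : φ (k • z) ∈ L := (hmemN _).mp hkq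
      rwa [_root_.map_smul] at this
  obtain ⟨s, hs⟩ := Module.projective_lifting_property N.mkQ
    (LinearMap.id : ((Fin n → ℤ) ⧸ N) →ₗ[ℤ] ((Fin n → ℤ) ⧸ N)) N.mkQ_surjective
  set r : (Fin n → ℤ) →ₗ[ℤ] (Fin n → ℤ) := LinearMap.id - s.comp N.mkQ with hr
  have hrN : ∀ z, r z ∈ N := by
    intro z
    have : N.mkQ (r z) = 0 := by
      simp only [hr, map_sub, LinearMap.sub_apply, LinearMap.id_apply, LinearMap.comp_apply]
      have := congrArg (fun f => f (N.mkQ z)) hs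
      simp only [LinearMap.comp_apply, LinearMap.id_apply] at this
      rw [this, sub_self]
    rwa [Submodule.mkQ_apply, Submodule.Quotient.mk_eq_zero] at this
  have hrid : ∀ m ∈ N, r m = m := by
    intro m hm
    have h0 : N.mkQ m = 0 := by rwa [Submodule.mkQ_apply, Submodule.Quotient.mk_eq_zero]
    simp [hr, h0]
  set c' : Fin n → ℚ := fun i => dotProduct c (φ (r (Pi.single i 1))) with hc'
  refine ⟨c', ?_, ?_⟩
  · intro i
    obtain ⟨a, ha⟩ := hc (φ (r (Pi.single i 1))) ((hmemN _).mp (hrN _))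
    exact ⟨a, ha⟩
  · intro y hy
    obtain ⟨m, hm⟩ : ∃ m : Fin n → ℤ, φ m = y := by
      have hint := hLΓ hy
      refine ⟨fun i => Classical.choose (hint i), funext fun i => Classical.choose_spec (hint i)⟩
    have hmN : m ∈ N := (hmemN m).mpr (hm ▸ hy)
    -- two linear maps agreeing on the standard basis
    have key : (dlin c').comp φ = (dlin c).comp (φ.comp r) := by
      apply (Pi.basisFun ℤ (Fin n)).ext
      intro i
      simp only [LinearMap.comp_apply, Pi.basisFun_apply]
      have hφsingle : φ (Pi.single i 1) = Pi.single i (1 : ℚ) := by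
        funext j
        by_cases h : j = i
        · subst h; simp [hφ, castMap]
        · simp [hφ, castMap, Pi.single_apply, h]
      show dotProduct c' (φ (Pi.single i 1)) = dotProduct c (φ (r (Pi.single i 1)))
      rw [hφsingle, dotProduct_single, mul_one]
    have := congrArg (fun f => f m) key
    simp only [LinearMap.comp_apply] at this
    have h2 : dotProduct c' (φ m) = dotProduct c (φ (r m)) := this
    rw [hrid m hmN] at h2
    rw [← hm]
    exact h2

/-- Let `Γ = ℤⁿ` be a unimodular non-degenerate even lattice (symmetric integer Gram
matrix `M` with `det M = ±1` and even diagonal) and `L` a non-degenerate primitive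
sublattice of `Γ`.  If `g` is an automorphism of `Γ` preserving `L` which acts
trivially on the orthogonal complement `L^⊥` in `Γ`, then the induced action of `g`
on the discriminant group `A(L) = L^∨/L` is trivial: for every `x` in the dual
lattice `L^∨ ⊆ L ⊗ ℚ` one has `g x − x ∈ L`. -/
theorem trivial_action_on_discriminant_of_trivial_on_complement
    {n : ℕ} (M : Matrix (Fin n) (Fin n) ℤ)
    (hsymm : M.transpose = M) (hunimod : M.det = 1 ∨ M.det = -1)
    (heven : ∀ i, Even (M i i))
    (L : Submodule ℤ (Fin n → ℚ))
    (hLΓ : (L : Set (Fin n → ℚ)) ⊆ intVecs n)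
    (hLprim : ∀ x ∈ intVecs n, (∃ k : ℤ, k ≠ 0 ∧ (k : ℤ) • x ∈ L) → x ∈ L)
    (hLnondeg : ∀ x ∈ L, (∀ y ∈ L, ratForm M x y = 0) → x = 0)
    (g : (Fin n → ℚ) ≃ₗ[ℚ] (Fin n → ℚ))
    (hgΓ : ∀ x ∈ intVecs n, g x ∈ intVecs n)
    (hgΓ' : ∀ x ∈ intVecs n, g.symm x ∈ intVecs n)
    (hgform : ∀ x y, ratForm M (g x) (g y) = ratForm M x y)
    (hgL : ∀ x ∈ L, g x ∈ L) (hgL' : ∀ x ∈ L, g.symm x ∈ L)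
    (hgperp : ∀ x ∈ intVecs n, (∀ y ∈ L, ratForm M x y = 0) → g x = x) :
    ∀ x ∈ Submodule.span ℚ (L : Set (Fin n → ℚ)),
      (∀ y ∈ L, ∃ c : ℤ, (c : ℚ) = ratForm M x y) → g x - x ∈ L := by
  classical
  intro x hxspan hxdual
  set Mq : Matrix (Fin n) (Fin n) ℚ := M.map (Int.cast : ℤ → ℚ) with hMq
  have hMqsymm : Mq.transpose = Mq := by
    rw [hMq, ← Matrix.transpose_map, hsymm]
  -- ratForm as (Mq * a) ⬝ y
  have hform : ∀ a b : Fin n → ℚ, ratForm M a b = dotProduct (Mq.mulVec a) b := by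
    intro a b
    rw [ratForm, ← hMq, dotProduct_mulVec, ← Matrix.mulVec_transpose, hMqsymm]
  set c : Fin n → ℚ := Mq.mulVec x with hc
  have hcint : ∀ y ∈ L, ∃ a : ℤ, (a : ℚ) = dotProduct c y := by
    intro y hy
    obtain ⟨a, ha⟩ := hxdual y hy
    exact ⟨a, by rw [ha, hform]⟩
  obtain ⟨c', hc'int, hc'eq⟩ := exists_integral_dual L hLΓ hLprim c hcint
  -- integer version of c'
  set c'' : Fin n → ℤ := fun i => Classical.choose (hc'int i) with hc''
  have hc''cast : castMap n c'' = c' := funext fun i => Classical.choose_spec (hc'int i)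
  -- solve M v'' = c'' over ℤ using unimodularity
  set v'' : Fin n → ℤ := M.det • (M.adjugate.mulVec c'') with hv''
  have hMv'' : M.mulVec v'' = c'' := by
    rw [hv'', Matrix.mulVec_smul, Matrix.mulVec_mulVec, Matrix.mul_adjugate,
      Matrix.smul_mulVec, Matrix.one_mulVec, smul_smul]
    rcases hunimod with h | h <;> simp [h]
  set v : Fin n → ℚ := castMap n v'' with hv
  have hvint : v ∈ intVecs n := castMap_mem_intVecs v''
  have hMv : Mq.mulVec v = c' := by
    rw [← hc''cast, ← hMv'']
    funext i
    simp only [castMap, hMq, Matrix.mulVec, dotProduct, Matrix.map_apply, LinearMap.coe_mk,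
      AddHom.coe_mk]
    push_cast
    rfl
  -- v and x induce the same functional on L
  have hvx : ∀ y ∈ L, ratForm M v y = ratForm M x y := by
    intro y hy
    rw [hform, hform, hMv, ← hc, hc'eq y hy]
  set w : Fin n → ℚ := v - x with hw
  have hwperp : ∀ y ∈ L, ratForm M w y = 0 := by
    intro y hy
    have : ratForm M w y = ratForm M v y - ratForm M x y := by
      rw [hform, hform, hform, hw, Matrix.mulVec_sub, sub_dotProduct]
    rw [this, hvx y hy, sub_self]
  -- find k clearing denominators of x
  obtain ⟨k, hk0, hkx⟩ : ∃ k : ℤ, k ≠ 0 ∧ (k : ℚ) • x ∈ L := by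
    refine Submodule.span_induction ?_ ?_ ?_ ?_ hxspan
    · intro z hz
      exact ⟨1, one_ne_zero, by simpa using hz⟩
    · exact ⟨1, one_ne_zero, by simpa using L.zero_mem⟩
    · rintro a b - - ⟨ka, hka0, hka⟩ ⟨kb, hkb0, hkb⟩
      refine ⟨ka * kb, mul_ne_zero hka0 hkb0, ?_⟩
      have h1 : ((ka * kb : ℤ) : ℚ) • (a + b)
          = (kb : ℤ) • ((ka : ℚ) • a) + (ka : ℤ) • ((kb : ℚ) • b) := by
        module
      rw [h1]
      exact L.add_mem (L.smul_mem _ hka) (L.smul_mem _ hkb)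
    · rintro q a - ⟨ka, hka0, hka⟩
      refine ⟨q.den * ka, mul_ne_zero (by exact_mod_cast q.den_nz) hka0, ?_⟩
      have h1 : ((q.den * ka : ℤ) : ℚ) • (q • a) = (q.num : ℤ) • ((ka : ℚ) • a) := by
        rw [← Int.cast_smul_eq_zsmul ℚ q.num, smul_smul, smul_smul]
        congr 1
        push_cast
        rw [mul_right_comm, mul_comm (q.den : ℚ) q, Rat.mul_den_eq_num]
      rw [h1]
      exact L.smul_mem _ hka
  -- k • w is an integral vector orthogonal to L, hence fixed by g
  have hkw_int : (k : ℚ) • w ∈ intVecs n := by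
    have h1 : (k : ℚ) • w = (k : ℚ) • v - (k : ℚ) • x := by rw [hw, smul_sub]
    rw [h1]
    exact intVecs_sub (intVecs_smul k hvint) (hLΓ hkx)
  have hkw_perp : ∀ y ∈ L, ratForm M ((k : ℚ) • w) y = 0 := by
    intro y hy
    rw [hform, Matrix.mulVec_smul, smul_dotProduct, ← hform, hwperp y hy, smul_zero]
  have hgkw : g ((k : ℚ) • w) = (k : ℚ) • w := hgperp _ hkw_int hkw_perp
  have hgw : g w = w := by
    have : (k : ℚ) • g w = (k : ℚ) • w := by rw [← _root_.map_smul]; exact hgkw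
    have hk0q : (k : ℚ) ≠ 0 := by exact_mod_cast hk0
    exact smul_right_injective _ hk0q this
  -- hence g x - x = g v - v is integral
  have hvxw : v = x + w := by rw [hw]; ring_nf
  have hgvx : g v - v = g x - x := by
    rw [hvxw, map_add, hgw]
    abel
  have hu_int : g x - x ∈ intVecs n := by
    rw [← hgvx]
    exact intVecs_sub (hgΓ v hvint) hvint
  -- and k • (g x - x) ∈ L
  have hku : (k : ℚ) • (g x - x) ∈ L := by
    have h1 : (k : ℚ) • (g x - x) = g ((k : ℚ) • x) - (k : ℚ) • x := by
      rw [_root_.map_smul, smul_sub]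
    rw [h1]
    exact L.sub_mem (hgL _ hkx) hkx
  exact hLprim _ hu_int ⟨k, hk0, by rwa [Int.cast_smul_eq_zsmul ℚ k (g x - x)] at hku⟩
end

section
/- Let L be a non-degenerate lattice over ℤ_p (p any prime) and v ∈ L with a = ⟨v,v⟩ ∈ ℤ_p^× ∪ 2ℤ_p^×. Then the reflection T(v): w ↦ w − (2⟨v,w⟩/a)v is an automorphism of L, and it induces the trivial automorphism on the discriminant group L^∨/L. -/
open Matrix

variable {p : ℕ} [Fact p.Prime]

/-- The bilinear form on `ℚ_pⁿ` associated to a Gram matrix `M` over `ℤ_p`. -/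
noncomputable def padicForm {n : ℕ} (M : Matrix (Fin n) (Fin n) ℤ_[p])
    (x y : Fin n → ℚ_[p]) : ℚ_[p] :=
  dotProduct x ((M.map (PadicInt.Coe.ringHom : ℤ_[p] →+* ℚ_[p])).mulVec y)

/-- The lattice `L = ℤ_pⁿ` inside `ℚ_pⁿ`. -/
def padicIntVecs (p n : ℕ) [Fact p.Prime] : Set (Fin n → ℚ_[p]) :=
  {x | ∀ i, ∃ a : ℤ_[p], (a : ℚ_[p]) = x i}

/-- The reflection `T(v) : w ↦ w − (2⟨v,w⟩/⟨v,v⟩)·v` on `ℚ_pⁿ`. -/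
noncomputable def padicReflection {n : ℕ} (M : Matrix (Fin n) (Fin n) ℤ_[p])
    (v w : Fin n → ℚ_[p]) : Fin n → ℚ_[p] :=
  w - (2 * padicForm M v w / padicForm M v v) • v

/-! The coefficient `2⟨v,w⟩/⟨v,v⟩` of the reflection is `p`-integral as soon as `⟨v,w⟩` is,
because the hypothesis on `a = ⟨v,v⟩` says exactly that `a ∣ 2` in `ℤ_p`. Hence `T(v)w - w`
is a `ℤ_p`-multiple of `v` for every `w ∈ L^∨ ⊇ L`, which gives both the stability of `L` and
the triviality on `L^∨/L`; being an involutive isometry is the usual computation for any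
anisotropic vector. -/

theorem dvd_of_isUnit_or_eq_mul_unit {R : Type*} [CommMonoid R] {a b : R}
    (ha : IsUnit a ∨ ∃ u : R, IsUnit u ∧ a = b * u) : a ∣ b := by
  rcases ha with ha | ⟨u, hu, rfl⟩
  · exact ha.dvd
  · exact hu.mul_right_dvd.mpr dvd_rfl

section padicForm

variable {n : ℕ} (M : Matrix (Fin n) (Fin n) ℤ_[p])

theorem padicForm_coe (v w : Fin n → ℤ_[p]) :
    padicForm M (fun i => (v i : ℚ_[p])) (fun i => (w i : ℚ_[p])) =
      ((v ⬝ᵥ M *ᵥ w : ℤ_[p]) : ℚ_[p]) := by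
  have hmulVec : (M.map (PadicInt.Coe.ringHom : ℤ_[p] →+* ℚ_[p])) *ᵥ (fun i => (w i : ℚ_[p])) =
      fun i => ((M *ᵥ w) i : ℚ_[p]) :=
    funext fun i => (RingHom.map_mulVec PadicInt.Coe.ringHom M w i).symm
  rw [padicForm, hmulVec]
  exact (RingHom.map_dotProduct PadicInt.Coe.ringHom v (M *ᵥ w)).symm

theorem padicForm_comm (hsymm : M.transpose = M) (x y : Fin n → ℚ_[p]) :
    padicForm M x y = padicForm M y x := by
  rw [padicForm, padicForm, dotProduct_mulVec, ← mulVec_transpose, ← transpose_map, hsymm,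
    dotProduct_comm]

theorem padicForm_sub_smul_right (x y z : Fin n → ℚ_[p]) (c : ℚ_[p]) :
    padicForm M x (y - c • z) = padicForm M x y - c * padicForm M x z := by
  simp only [padicForm, mulVec_sub, mulVec_smul, dotProduct_sub, dotProduct_smul, smul_eq_mul]

theorem padicForm_sub_smul_left (x y z : Fin n → ℚ_[p]) (c : ℚ_[p]) :
    padicForm M (x - c • z) y = padicForm M x y - c * padicForm M z y := by
  simp only [padicForm, sub_dotProduct, smul_dotProduct, smul_eq_mul]

theorem exists_coe_eq_padicForm {x y : Fin n → ℚ_[p]} (hx : x ∈ padicIntVecs p n)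
    (hy : y ∈ padicIntVecs p n) : ∃ c : ℤ_[p], (c : ℚ_[p]) = padicForm M x y := by
  choose a ha using hx
  choose b hb using hy
  refine ⟨a ⬝ᵥ M *ᵥ b, ?_⟩
  rw [← padicForm_coe, funext ha, funext hb]

end padicForm

theorem coe_mem_padicIntVecs {n : ℕ} (x : Fin n → ℤ_[p]) :
    (fun i => (x i : ℚ_[p])) ∈ padicIntVecs p n :=
  fun i => ⟨x i, rfl⟩

theorem add_mem_padicIntVecs {n : ℕ} {x y : Fin n → ℚ_[p]} (hx : x ∈ padicIntVecs p n)
    (hy : y ∈ padicIntVecs p n) : x + y ∈ padicIntVecs p n := by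
  intro i
  obtain ⟨a, ha⟩ := hx i
  obtain ⟨b, hb⟩ := hy i
  exact ⟨a + b, by rw [PadicInt.coe_add, ha, hb, Pi.add_apply]⟩

section padicReflection

variable {n : ℕ} (M : Matrix (Fin n) (Fin n) ℤ_[p]) {v : Fin n → ℚ_[p]}

theorem padicForm_padicReflection_right_self (hv : padicForm M v v ≠ 0) (w : Fin n → ℚ_[p]) :
    padicForm M v (padicReflection M v w) = -padicForm M v w := by
  rw [padicReflection, padicForm_sub_smul_right, div_mul_cancel₀ _ hv]
  ring

theorem padicReflection_padicReflection (hv : padicForm M v v ≠ 0) (w : Fin n → ℚ_[p]) :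
    padicReflection M v (padicReflection M v w) = w := by
  rw [padicReflection, padicForm_padicReflection_right_self M hv, padicReflection, mul_neg,
    neg_div, neg_smul, sub_neg_eq_add, sub_add_cancel]

theorem padicForm_padicReflection (hsymm : M.transpose = M) (hv : padicForm M v v ≠ 0)
    (w w' : Fin n → ℚ_[p]) :
    padicForm M (padicReflection M v w) (padicReflection M v w') = padicForm M w w' := by
  simp only [padicReflection]
  rw [padicForm_sub_smul_right, padicForm_sub_smul_left, padicForm_sub_smul_left,
    padicForm_comm M hsymm w v]
  field_simp
  ring

end padicReflection

section integral

variable {n : ℕ} (M : Matrix (Fin n) (Fin n) ℤ_[p]) {v : Fin n → ℤ_[p]}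

theorem padicForm_coe_self_ne_zero (hv : v ⬝ᵥ M *ᵥ v ∣ 2) :
    padicForm M (fun i => (v i : ℚ_[p])) (fun i => (v i : ℚ_[p])) ≠ 0 := by
  rw [padicForm_coe]
  exact PadicInt.coe_ne_zero.mpr (ne_zero_of_dvd_ne_zero two_ne_zero hv)

theorem padicReflection_sub_self_mem (hv : v ⬝ᵥ M *ᵥ v ∣ 2) {w : Fin n → ℚ_[p]}
    (hw : ∃ t : ℤ_[p], (t : ℚ_[p]) = padicForm M (fun i => (v i : ℚ_[p])) w) :
    padicReflection M (fun i => (v i : ℚ_[p])) w - w ∈ padicIntVecs p n := by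
  obtain ⟨t, ht⟩ := hw
  have hv₀ := padicForm_coe_self_ne_zero M hv
  obtain ⟨c, hc⟩ := hv
  have hcoef : 2 * padicForm M (fun i => v i) w / padicForm M (fun i => v i) (fun i => v i) =
      ((c * t : ℤ_[p]) : ℚ_[p]) := by
    rw [div_eq_iff hv₀, padicForm_coe, ← ht, PadicInt.coe_mul,
      show (2 : ℚ_[p]) = ((2 : ℤ_[p]) : ℚ_[p]) by norm_cast, hc, PadicInt.coe_mul]
    ring
  convert coe_mem_padicIntVecs (-(c * t) • v) using 1
  funext i
  simp only [padicReflection, hcoef, sub_sub_cancel_left, Pi.neg_apply, Pi.smul_apply,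
    smul_eq_mul, PadicInt.coe_neg, PadicInt.coe_mul, neg_mul]

end integral

theorem padicReflection_isAutomorphism_and_trivial_on_discriminant_general
    {n : ℕ} (M : Matrix (Fin n) (Fin n) ℤ_[p])
    (hsymm : M.transpose = M)
    (v : Fin n → ℤ_[p])
    (ha : IsUnit (dotProduct v (M.mulVec v)) ∨
      ∃ u : ℤ_[p], IsUnit u ∧ dotProduct v (M.mulVec v) = 2 * u) :
    letI vQ : Fin n → ℚ_[p] := fun i => (v i : ℚ_[p])
    (∀ w ∈ padicIntVecs p n, padicReflection M vQ w ∈ padicIntVecs p n) ∧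
    (∀ w, padicReflection M vQ (padicReflection M vQ w) = w) ∧
    (∀ w w', padicForm M (padicReflection M vQ w) (padicReflection M vQ w') =
      padicForm M w w') ∧
    (∀ w : Fin n → ℚ_[p],
      (∀ y ∈ padicIntVecs p n, ∃ c : ℤ_[p], (c : ℚ_[p]) = padicForm M w y) →
      padicReflection M vQ w - w ∈ padicIntVecs p n) := by
  have hv : v ⬝ᵥ M *ᵥ v ∣ 2 := dvd_of_isUnit_or_eq_mul_unit ha
  have hv₀ := padicForm_coe_self_ne_zero M hv
  refine ⟨fun w hw => ?_, padicReflection_padicReflection M hv₀,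
    padicForm_padicReflection M hsymm hv₀, fun w hw => ?_⟩
  · have hT := padicReflection_sub_self_mem M hv
      (exists_coe_eq_padicForm M (coe_mem_padicIntVecs v) hw)
    simpa only [sub_add_cancel] using add_mem_padicIntVecs hT hw
  · obtain ⟨t, ht⟩ := hw _ (coe_mem_padicIntVecs v)
    exact padicReflection_sub_self_mem M hv ⟨t, ht.trans (padicForm_comm M hsymm w _)⟩

/-- Let `L` be a non-degenerate lattice over `ℤ_p` (Gram matrix `M`, symmetric,
`det M ≠ 0`) and `v ∈ L` with `a = ⟨v,v⟩ ∈ ℤ_p^× ∪ 2ℤ_p^×`.  Then the reflection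
`T(v) : w ↦ w − (2⟨v,w⟩/a)v` is an automorphism of `L` (it preserves `L`, is an
involution, and preserves the bilinear form), and it induces the trivial
automorphism on the discriminant group `L^∨/L`: for every `w ∈ L^∨` one has
`T(v)w − w ∈ L`. -/
theorem padicReflection_isAutomorphism_and_trivial_on_discriminant
    {n : ℕ} (M : Matrix (Fin n) (Fin n) ℤ_[p])
    (hsymm : M.transpose = M) (hdet : M.det ≠ 0)
    (v : Fin n → ℤ_[p])
    (ha : IsUnit (dotProduct v (M.mulVec v)) ∨
      ∃ u : ℤ_[p], IsUnit u ∧ dotProduct v (M.mulVec v) = 2 * u) :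
    letI vQ : Fin n → ℚ_[p] := fun i => (v i : ℚ_[p])
    (∀ w ∈ padicIntVecs p n, padicReflection M vQ w ∈ padicIntVecs p n) ∧
    (∀ w, padicReflection M vQ (padicReflection M vQ w) = w) ∧
    (∀ w w', padicForm M (padicReflection M vQ w) (padicReflection M vQ w') =
      padicForm M w w') ∧
    (∀ w : Fin n → ℚ_[p],
      (∀ y ∈ padicIntVecs p n, ∃ c : ℤ_[p], (c : ℚ_[p]) = padicForm M w y) →
      padicReflection M vQ w - w ∈ padicIntVecs p n) :=
  padicReflection_isAutomorphism_and_trivial_on_discriminant_general M hsymm v ha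
end

section
/- Let L be a non-degenerate lattice over ℤ_p containing the hyperbolic plane U (Gram matrix [[0,1],[1,0]]) as an orthogonal direct summand, where p is an odd prime. Then for every x ∈ ℤ_p^×, there is a vector v_x = e₁ + x e₂ ∈ U with ⟨v_x,v_x⟩ = 2x, and the reflections T(v_x) generate, via the map g ↦ (det g, spinor norm of g), the full group {±1} × ℤ_p^×/(ℤ_p^×)². -/
open Matrix

/-- Let `p` be an odd prime and `L` a non-degenerate lattice over `ℤ_p` containing the
hyperbolic plane `U` (Gram matrix `[[0,1],[1,0]]`) as an orthogonal direct summand,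
so that `L` has Gram matrix `U ⊕ M'`.  Then for every `x ∈ ℤ_p^×` the vector
`v_x = e₁ + x·e₂ ∈ U ⊆ L` satisfies `⟨v_x, v_x⟩ = 2x`, and the images
`(det T(v_x), θ(T(v_x))) = (−1, 2x mod squares)` of the reflections `T(v_x)` generate
the full group `{±1} × ℤ_p^×/(ℤ_p^×)²` inside `{±1} × ℚ_p^×/(ℚ_p^×)²`. -/
theorem hyperbolic_reflections_generate_spinor_group
    {p : ℕ} [Fact p.Prime] (hp : p ≠ 2) {n : ℕ}
    (M' : Matrix (Fin n) (Fin n) ℤ_[p]) (hsymm : M'.transpose = M')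
    (hdet : (Matrix.fromBlocks !![(0 : ℤ_[p]), 1; 1, 0] 0 0 M').det ≠ 0) :
    letI M : Matrix (Fin 2 ⊕ Fin n) (Fin 2 ⊕ Fin n) ℤ_[p] :=
      Matrix.fromBlocks !![(0 : ℤ_[p]), 1; 1, 0] 0 0 M'
    letI vx : ℤ_[p]ˣ → (Fin 2 ⊕ Fin n) → ℤ_[p] :=
      fun x => Sum.elim ![1, (x : ℤ_[p])] 0
    letI sq : Subgroup ℚ_[p]ˣ := (powMonoidHom 2 : ℚ_[p]ˣ →* ℚ_[p]ˣ).range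
    (∀ x : ℤ_[p]ˣ, dotProduct (vx x) (M.mulVec (vx x)) = 2 * (x : ℤ_[p])) ∧
    Subgroup.closure
        {z : ℤˣ × (ℚ_[p]ˣ ⧸ sq) |
          ∃ (x : ℤ_[p]ˣ) (u : ℚ_[p]ˣ),
            (u : ℚ_[p]) = 2 * ((x : ℤ_[p]) : ℚ_[p]) ∧
            z = ((-1 : ℤˣ), QuotientGroup.mk u)} =
      Subgroup.prod ⊤
        ((QuotientGroup.mk' sq).comp
          (Units.map (PadicInt.Coe.ringHom : ℤ_[p] →+* ℚ_[p]).toMonoidHom)).range := by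
  have h2 : IsUnit (2 : ℤ_[p]) := by
    rw [PadicInt.isUnit_iff]
    have hle : ‖(2 : ℤ_[p])‖ ≤ 1 := PadicInt.norm_le_one _
    have hnlt : ¬ ‖(2 : ℤ_[p])‖ < 1 := by
      intro h
      have : ((p : ℤ)) ∣ 2 := by
        have := (PadicInt.norm_int_lt_one_iff_dvd (p := p) 2).mp (by exact_mod_cast h)
        exact_mod_cast this
      have hp2 : p ∣ 2 := by exact_mod_cast this
      exact hp ((Nat.prime_dvd_prime_iff_eq Fact.out Nat.prime_two).mp hp2)
    linarith [lt_or_eq_of_le hle |>.resolve_left hnlt]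
  have h22 : ((2 : ℤ_[p]) : ℚ_[p]) = 2 := by norm_cast
  constructor
  · intro x
    simp [Matrix.fromBlocks_mulVec, Matrix.mulVec, dotProduct, Fin.sum_univ_two,
      Matrix.vecHead, Matrix.vecTail]
    ring
  · set sq : Subgroup ℚ_[p]ˣ := (powMonoidHom 2 : ℚ_[p]ˣ →* ℚ_[p]ˣ).range with hsq
    set f : ℤ_[p]ˣ →* ℚ_[p]ˣ ⧸ sq :=
      ((QuotientGroup.mk' sq).comp
        (Units.map (PadicInt.Coe.ringHom : ℤ_[p] →+* ℚ_[p]).toMonoidHom)) with hf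
    set S : Set (ℤˣ × (ℚ_[p]ˣ ⧸ sq)) :=
      {z | ∃ (x : ℤ_[p]ˣ) (u : ℚ_[p]ˣ),
            (u : ℚ_[p]) = 2 * ((x : ℤ_[p]) : ℚ_[p]) ∧
            z = ((-1 : ℤˣ), QuotientGroup.mk u)} with hS
    have hgen : ∀ y : ℤ_[p]ˣ, ((-1 : ℤˣ), f y) ∈ S := by
      intro y
      refine ⟨h2.unit⁻¹ * y, Units.map (PadicInt.Coe.ringHom).toMonoidHom y, ?_, ?_⟩
      swap
      · rfl
      have : (2 : ℤ_[p]) * ((h2.unit⁻¹ * y : ℤ_[p]ˣ) : ℤ_[p]) = (y : ℤ_[p]) := by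
        have h2v : ((h2.unit : ℤ_[p]ˣ) : ℤ_[p]) = 2 := h2.unit_spec
        calc (2 : ℤ_[p]) * ((h2.unit⁻¹ * y : ℤ_[p]ˣ) : ℤ_[p])
            = ((h2.unit * (h2.unit⁻¹ * y) : ℤ_[p]ˣ) : ℤ_[p]) := by
              push_cast; rw [h2v]
          _ = (y : ℤ_[p]) := by rw [mul_inv_cancel_left]
      have h3 := congrArg (fun z : ℤ_[p] => (z : ℚ_[p])) this
      push_cast at h3
      show ((y : ℤ_[p]) : ℚ_[p]) = 2 * ((((h2.unit⁻¹ * y : ℤ_[p]ˣ) : ℤ_[p])) : ℚ_[p])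
      rw [← h3, h22]
      push_cast
      ring
    apply le_antisymm
    · rw [Subgroup.closure_le]
      rintro z ⟨x, u, hu, rfl⟩
      refine Subgroup.mem_prod.mpr ⟨Subgroup.mem_top _, ?_⟩
      refine ⟨h2.unit * x, ?_⟩
      have heq : Units.map (PadicInt.Coe.ringHom : ℤ_[p] →+* ℚ_[p]).toMonoidHom
          (h2.unit * x) = u := by
        ext
        have h2v : ((h2.unit : ℤ_[p]ˣ) : ℤ_[p]) = 2 := h2.unit_spec
        show ((((h2.unit * x : ℤ_[p]ˣ) : ℤ_[p])) : ℚ_[p]) = (u : ℚ_[p])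
        rw [hu]
        push_cast [h2v, h22]
        ring
      exact congrArg (QuotientGroup.mk' sq) heq
    · rintro ⟨s, q⟩ hmem
      rcases Subgroup.mem_prod.mp hmem with ⟨-, ⟨y, hy⟩⟩
      subst hy
      rcases Int.units_eq_one_or s with rfl | rfl
      · have : ((1 : ℤˣ), f y) = ((-1 : ℤˣ), f y) * ((-1 : ℤˣ), f 1) := by
          refine Prod.ext (by simp) ?_
          show f y = f y * f 1
          rw [_root_.map_one]
          exact (mul_one (f y)).symm
        rw [this]
        exact mul_mem (Subgroup.subset_closure (hgen y)) (Subgroup.subset_closure (hgen 1))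
      · exact Subgroup.subset_closure (hgen y)
end

section
/- Let t be a nonzero integer and U(t) the lattice with Gram matrix [[0,t],[t,0]]. The orthogonal group O(U(t)) is isomorphic to (ℤ/2ℤ)², generated by the reflections T(e₁+e₂) and T(e₁−e₂), and the image of O(U(t)) under f = det × θ is the subgroup generated by (−1, 2t mod squares) and (−1, −2t mod squares) in {±1} × ℚ^×/(ℚ^×)². -/
open Matrix

/-- The reflection `T(v) : w ↦ w − (2⟨v,w⟩/⟨v,v⟩)·v` on `ℚⁿ`. -/
noncomputable def ratReflection {n : ℕ} (M : Matrix (Fin n) (Fin n) ℤ)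
    (v w : Fin n → ℚ) : Fin n → ℚ :=
  w - (2 * ratForm M v w / ratForm M v v) • v

/-!
Writing `P = [[a, b], [c, d]]`, the condition `Pᵀ G P = G` says `ac = bd = 0` and `ad + bc = 1`,
so `O(U(t)) = {±1, ±S}`.

A reflection `T(v)` of `U(t) ⊗ ℚ` exists only when `⟨v, v⟩ = 2t v₀ v₁ ≠ 0`, and its matrix is
`[[0, r], [r⁻¹, 0]]` with `r = -v₀/v₁`, while `⟨v, v⟩ = -2t · r · v₁²`. A product of `k` such
matrices has determinant `(-1)ᵏ` and maps `(1, 1)` to `(c, c⁻¹)` with `c ≡ r₁ ⋯ rₖ` modulo squares,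
so its spinor norm is `(-2t)ᵏ c` modulo squares. For `P = ±1, ±S` one reads off `c = ±1`, hence
`f(P)` lies in the group generated by `(-1, -2t)` and `(1, -1) = (-1, 2t)(-1, -2t)`. Conversely
`S = T(e₁ - e₂)` and `-S = T(e₁ + e₂)` realise the two generators.
-/

lemma Matrix.det_sq_eq_one_of_transpose_mul_mul_self {n R : Type*} [Fintype n] [DecidableEq n]
    [CommRing R] [IsDomain R] {G P : Matrix n n R} (hG : G.det ≠ 0) (h : Pᵀ * G * P = G) :
    P.det ^ 2 = 1 := by
  have hdet := congrArg det h
  rw [det_mul, det_mul, det_transpose] at hdet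
  exact mul_right_cancel₀ hG (by linear_combination hdet)

lemma List.foldr_comp_eq_comp {α : Type*} (l : List (α → α)) (f : α → α) :
    l.foldr (· ∘ ·) f = l.foldr (· ∘ ·) id ∘ f := by
  induction l with
  | nil => rfl
  | cons g l ih => simp only [List.foldr_cons, ih, Function.comp_assoc]

lemma List.foldr_comp_map_mulVec {n R : Type*} [Fintype n] [DecidableEq n] [CommSemiring R]
    (l : List (Matrix n n R)) : (l.map mulVec).foldr (· ∘ ·) id = l.prod.mulVec := by
  induction l with
  | nil => funext w; simp
  | cons M l ih => funext w; simp [ih]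

def antidiagMatrix {K : Type*} [Field K] (r : K) : Matrix (Fin 2) (Fin 2) K := !![0, r; r⁻¹, 0]

section antidiagMatrix

variable {K : Type*} [Field K]

lemma det_antidiagMatrix {r : K} (hr : r ≠ 0) : (antidiagMatrix r).det = -1 := by
  simp [antidiagMatrix, det_fin_two_of, hr]

lemma det_prod_antidiagMatrix {rs : List K} (hrs : ∀ r ∈ rs, r ≠ 0) :
    (rs.map antidiagMatrix).prod.det = (-1) ^ rs.length := by
  induction rs with
  | nil => simp
  | cons r rs ih =>
    rw [List.map_cons, List.prod_cons, det_mul, det_antidiagMatrix (hrs r List.mem_cons_self),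
      ih fun x hx => hrs x (List.mem_cons_of_mem r hx), List.length_cons, pow_succ']

lemma prod_antidiagMatrix_mulVec {rs : List K} (hrs : ∀ r ∈ rs, r ≠ 0) :
    ∃ c s : K, s ≠ 0 ∧ c = rs.prod * s ^ 2 ∧
      (rs.map antidiagMatrix).prod *ᵥ ![1, 1] = ![c, c⁻¹] := by
  induction rs with
  | nil => exact ⟨1, 1, one_ne_zero, by simp, by simp⟩
  | cons r rs ih =>
    obtain ⟨c, s, hs, hc, hmul⟩ := ih fun x hx => hrs x (List.mem_cons_of_mem r hx)
    have hprod : rs.prod ≠ 0 := List.prod_ne_zero fun h => hrs 0 (List.mem_cons_of_mem r h) rfl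
    refine ⟨r / c, (rs.prod * s)⁻¹, by simp [hs, hprod], ?_, ?_⟩
    · rw [hc, List.prod_cons]
      field_simp
    · rw [List.map_cons, List.prod_cons, ← mulVec_mulVec, hmul]
      funext i
      fin_cases i <;> simp [antidiagMatrix, div_eq_mul_inv, mul_comm]

end antidiagMatrix

def gramU (t : ℤ) : Matrix (Fin 2) (Fin 2) ℤ := !![0, t; t, 0]

def swapMatrix : Matrix (Fin 2) (Fin 2) ℤ := !![0, 1; 1, 0]

lemma Int.cases_of_mul_eq_zero_of_mul_add_mul_eq_one {a b c d : ℤ} (hac : a * c = 0)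
    (hbd : b * d = 0) (h : a * d + b * c = 1) :
    a = 1 ∧ b = 0 ∧ c = 0 ∧ d = 1 ∨ a = -1 ∧ b = 0 ∧ c = 0 ∧ d = -1 ∨
      a = 0 ∧ b = 1 ∧ c = 1 ∧ d = 0 ∨ a = 0 ∧ b = -1 ∧ c = -1 ∧ d = 0 := by
  rcases mul_eq_zero.mp hac with rfl | rfl
  · rcases Int.eq_one_or_neg_one_of_mul_eq_one' (by simpa using h) with ⟨rfl, rfl⟩ | ⟨rfl, rfl⟩ <;>
      grind
  · rcases Int.eq_one_or_neg_one_of_mul_eq_one' (by simpa using h) with ⟨rfl, rfl⟩ | ⟨rfl, rfl⟩ <;>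
      grind

lemma transpose_mul_gramU_mul (t a b c d : ℤ) :
    (!![a, b; c, d])ᵀ * gramU t * !![a, b; c, d] =
      !![2 * t * (a * c), t * (a * d + b * c); t * (a * d + b * c), 2 * t * (b * d)] := by
  ext i j
  fin_cases i <;> fin_cases j <;> simp [gramU, mul_apply, Fin.sum_univ_two] <;> ring

lemma isometry_gramU_iff (t : ℤ) (ht : t ≠ 0) (P : Matrix (Fin 2) (Fin 2) ℤ) :
    Pᵀ * gramU t * P = gramU t ↔ P = 1 ∨ P = -1 ∨ P = swapMatrix ∨ P = -swapMatrix := by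
  rw [eta_fin_two P, transpose_mul_gramU_mul, gramU, swapMatrix, one_fin_two]
  simp only [neg_of, neg_cons, neg_empty, EmbeddingLike.apply_eq_iff_eq, vecCons_inj, and_true,
    and_assoc]
  constructor
  · rintro ⟨hac, hadbc, -, hbd⟩
    exact Int.cases_of_mul_eq_zero_of_mul_add_mul_eq_one (by simpa [ht] using hac)
      (by simpa [ht] using hbd) (by simpa [ht] using hadbc)
  · rintro (⟨h₁, h₂, h₃, h₄⟩ | ⟨h₁, h₂, h₃, h₄⟩ | ⟨h₁, h₂, h₃, h₄⟩ | ⟨h₁, h₂, h₃, h₄⟩) <;>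
      simp [h₁, h₂, h₃, h₄]

lemma mul_self_eq_one_of_isometry_gramU {t : ℤ} (ht : t ≠ 0) {P : Matrix (Fin 2) (Fin 2) ℤ}
    (hP : Pᵀ * gramU t * P = gramU t) : P * P = 1 := by
  have hS : swapMatrix * swapMatrix = 1 := by simp [swapMatrix, one_fin_two]
  rcases (isometry_gramU_iff t ht P).mp hP with rfl | rfl | rfl | rfl <;> simp [hS]

lemma ratForm_gramU (t : ℤ) (v w : Fin 2 → ℚ) :
    ratForm (gramU t) v w = t * (v 0 * w 1 + v 1 * w 0) := by
  simp [ratForm, gramU, dotProduct, mulVec, Fin.sum_univ_two]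
  ring

section reflection

variable {t : ℤ} {v : Fin 2 → ℚ}

lemma ne_zero_of_ratForm_gramU_self_ne_zero (hv : ratForm (gramU t) v v ≠ 0) :
    (t : ℚ) ≠ 0 ∧ v 0 ≠ 0 ∧ v 1 ≠ 0 := by
  rw [ratForm_gramU] at hv
  refine ⟨?_, ?_, ?_⟩ <;> rintro h <;> simp [h] at hv

lemma ratForm_gramU_self (hv : v 1 ≠ 0) :
    ratForm (gramU t) v v = -(2 * t) * -(v 0 / v 1) * v 1 ^ 2 := by
  rw [ratForm_gramU]
  field_simp
  ring

lemma ratReflection_gramU (hv : ratForm (gramU t) v v ≠ 0) :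
    ratReflection (gramU t) v = (antidiagMatrix (-(v 0 / v 1))).mulVec := by
  obtain ⟨ht, h₀, h₁⟩ := ne_zero_of_ratForm_gramU_self_ne_zero hv
  funext w i
  fin_cases i <;> simp [ratReflection, ratForm_gramU, antidiagMatrix, mulVec, dotProduct] <;>
    field_simp <;> ring

lemma map_swapMatrix : swapMatrix.map (Int.cast : ℤ → ℚ) = antidiagMatrix 1 := by
  ext i j; fin_cases i <;> fin_cases j <;> simp [swapMatrix, antidiagMatrix]

lemma map_neg_swapMatrix : (-swapMatrix).map (Int.cast : ℤ → ℚ) = antidiagMatrix (-1) := by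
  ext i j; fin_cases i <;> fin_cases j <;> simp [swapMatrix, antidiagMatrix]

lemma swapMatrix_mulVec_eq_ratReflection (ht : t ≠ 0) :
    (swapMatrix.map (Int.cast : ℤ → ℚ)).mulVec = ratReflection (gramU t) ![1, -1] := by
  rw [ratReflection_gramU (by simp [ratForm_gramU, ht]), map_swapMatrix]
  norm_num

lemma neg_swapMatrix_mulVec_eq_ratReflection (ht : t ≠ 0) :
    ((-swapMatrix).map (Int.cast : ℤ → ℚ)).mulVec = ratReflection (gramU t) ![1, 1] := by
  rw [ratReflection_gramU (by simp [ratForm_gramU, ht]), map_neg_swapMatrix]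
  norm_num

lemma prod_ratForm_gramU_self {l : List (Fin 2 → ℚ)} (hl : ∀ v ∈ l, v 1 ≠ 0) :
    (l.map fun v => ratForm (gramU t) v v).prod =
      (-(2 * t)) ^ l.length * (l.map fun v => -(v 0 / v 1)).prod *
        (l.map fun v => v 1).prod ^ 2 := by
  rw [List.map_congr_left fun v hv => ratForm_gramU_self (hl v hv), List.prod_map_mul,
    List.prod_map_mul, List.map_const', List.prod_replicate,
    show (l.map fun v => v 1 ^ 2) = (l.map fun v => v 1).map (powMonoidHom 2) by simp,
    ← map_list_prod, powMonoidHom_apply]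

lemma eq_prod_antidiagMatrix_of_foldr_ratReflection_gramU {l : List (Fin 2 → ℚ)}
    (hl : ∀ v ∈ l, ratForm (gramU t) v v ≠ 0) {M : Matrix (Fin 2) (Fin 2) ℚ}
    (hM : ∀ w, (l.map (ratReflection (gramU t))).foldr (· ∘ ·) id w = M *ᵥ w) :
    M = ((l.map fun v => -(v 0 / v 1)).map antidiagMatrix).prod := by
  apply mulVec_injective
  rw [← List.foldr_comp_map_mulVec, List.map_map, List.map_map, ← funext hM]
  congr 1
  exact List.map_congr_left fun v hv => ratReflection_gramU (hl v hv)

end reflection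

abbrev SquareClasses : Type := ℚˣ ⧸ (powMonoidHom 2 : ℚˣ →* ℚˣ).range

lemma SquareClasses.mk_eq_of_val_eq_mul_sq {u w : ℚˣ} {σ : ℚ} (hσ : σ ≠ 0)
    (h : (u : ℚ) = w * σ ^ 2) : (u : SquareClasses) = w := by
  have hu : u = w * Units.mk0 σ hσ ^ 2 := Units.ext (by simp [h])
  have hsq : ((Units.mk0 σ hσ ^ 2 : ℚˣ) : SquareClasses) = 1 :=
    (QuotientGroup.eq_one_iff _).mpr ⟨Units.mk0 σ hσ, rfl⟩
  rw [hu, QuotientGroup.mk_mul, hsq, mul_one]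

lemma SquareClasses.mk_mul_self (u : ℚˣ) : (u : SquareClasses) * u = 1 := by
  rw [← QuotientGroup.mk_mul, QuotientGroup.eq_one_iff]
  exact ⟨u, sq u⟩

def spinorGenerators (t : ℤ) : Set (ℚˣ × SquareClasses) :=
  {z | ∃ u : ℚˣ, (u : ℚ) = 2 * t ∧ z = ((-1 : ℚˣ), QuotientGroup.mk u)} ∪
    {z | ∃ u : ℚˣ, (u : ℚ) = -(2 * t) ∧ z = ((-1 : ℚˣ), QuotientGroup.mk u)}

/-- The image of `O(U(t))` under `det × θ`, with `θ(T(v₁) ⋯ T(vₖ)) = ⟨v₁,v₁⟩ ⋯ ⟨vₖ,vₖ⟩`. -/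
def spinorImage (t : ℤ) : Set (ℚˣ × SquareClasses) :=
  {z | ∃ P : Matrix (Fin 2) (Fin 2) ℤ, Pᵀ * gramU t * P = gramU t ∧
    ∃ l : List (Fin 2 → ℚ), (∀ v ∈ l, ratForm (gramU t) v v ≠ 0) ∧
      (∀ w, (l.map (ratReflection (gramU t))).foldr (· ∘ ·) id w =
        (P.map (Int.cast : ℤ → ℚ)).mulVec w) ∧
      ∃ (d u : ℚˣ), (d : ℚ) = (P.map (Int.cast : ℤ → ℚ)).det ∧
        (u : ℚ) = (l.map fun v => ratForm (gramU t) v v).prod ∧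
        z = (d, QuotientGroup.mk u)}

section spinorImage

variable {t : ℤ}

lemma mem_closure_spinorGenerators (ht : t ≠ 0) (k : ℕ) {ε : ℚ} (hε : ε = 1 ∨ ε = -1)
    {σ : ℚ} (hσ : σ ≠ 0) {u : ℚˣ} (hu : (u : ℚ) = (-(2 * t)) ^ k * ε * σ ^ 2) :
    (((-1) ^ k, (u : SquareClasses)) : ℚˣ × SquareClasses) ∈
      Subgroup.closure (spinorGenerators t) := by
  have h2t : (2 * t : ℚ) ≠ 0 := by simpa using ht
  set a := Units.mk0 (2 * t : ℚ) h2t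
  set b := Units.mk0 (-(2 * t) : ℚ) (neg_ne_zero.mpr h2t)
  have ha : ((-1 : ℚˣ), (a : SquareClasses)) ∈ Subgroup.closure (spinorGenerators t) :=
    Subgroup.subset_closure (Or.inl ⟨a, rfl, rfl⟩)
  have hb : ((-1 : ℚˣ), (b : SquareClasses)) ∈ Subgroup.closure (spinorGenerators t) :=
    Subgroup.subset_closure (Or.inr ⟨b, rfl, rfl⟩)
  rcases hε with rfl | rfl
  · have hub : (u : SquareClasses) = (b ^ k : ℚˣ) :=
      SquareClasses.mk_eq_of_val_eq_mul_sq hσ (by simp [hu, b])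
    rw [hub, QuotientGroup.mk_pow, ← Prod.pow_mk]
    exact pow_mem hb k
  · -- `-1 ≡ 2t · (-2t)` modulo squares
    have hub : (u : SquareClasses) = (b ^ k * (a * b) : ℚˣ) :=
      SquareClasses.mk_eq_of_val_eq_mul_sq (div_ne_zero hσ h2t) (by simp [hu, a, b]; field_simp)
    have hone : ((-1 : ℚˣ) ^ k) = (-1) ^ k * ((-1) * (-1)) := by simp
    rw [hub, hone, QuotientGroup.mk_mul, QuotientGroup.mk_pow, QuotientGroup.mk_mul,
      ← Prod.mk_mul_mk, ← Prod.mk_mul_mk, ← Prod.pow_mk]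
    exact mul_mem (pow_mem hb k) (mul_mem ha hb)

lemma spinorImage_subset_closure (ht : t ≠ 0) :
    spinorImage t ⊆ Subgroup.closure (spinorGenerators t) := by
  rintro _ ⟨P, hP, l, hl, hF, d, u, hd, hu, rfl⟩
  have hv : ∀ v ∈ l, (t : ℚ) ≠ 0 ∧ v 0 ≠ 0 ∧ v 1 ≠ 0 :=
    fun v hv => ne_zero_of_ratForm_gramU_self_ne_zero (hl v hv)
  set rs := l.map fun v => -(v 0 / v 1)
  have hrs : ∀ r ∈ rs, r ≠ 0 := by
    simp only [rs, List.mem_map]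
    rintro _ ⟨v, hvl, rfl⟩
    simp [(hv v hvl).2.1, (hv v hvl).2.2]
  have hPN : P.map (Int.cast : ℤ → ℚ) = (rs.map antidiagMatrix).prod :=
    eq_prod_antidiagMatrix_of_foldr_ratReflection_gramU hl hF
  obtain ⟨c, s, hs, hc, hN⟩ := prod_antidiagMatrix_mulVec hrs
  have hcP : c = (P 0 0 + P 0 1 : ℤ) := by
    have := congrFun hN 0
    rw [← hPN] at this
    simpa [mulVec, dotProduct] using this.symm
  have hε : ((P 0 0 + P 0 1 : ℤ) : ℚ) = 1 ∨ ((P 0 0 + P 0 1 : ℤ) : ℚ) = -1 := by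
    rcases (isometry_gramU_iff t ht P).mp hP with rfl | rfl | rfl | rfl <;> simp [swapMatrix]
  have hd' : d = (-1) ^ l.length :=
    Units.ext (by rw [hd, hPN, det_prod_antidiagMatrix hrs]; simp [rs])
  have hσ : (l.map fun v => v 1).prod / s ≠ 0 := by
    refine div_ne_zero (List.prod_ne_zero fun h => ?_) hs
    obtain ⟨v, hvl, h⟩ := List.mem_map.mp h
    exact (hv v hvl).2.2 h
  rw [hd']
  refine mem_closure_spinorGenerators ht _ hε hσ ?_
  rw [hu, prod_ratForm_gramU_self fun v hvl => (hv v hvl).2.2, ← hcP, hc]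
  field_simp
  ring

lemma one_mem_spinorImage : (1 : ℚˣ × SquareClasses) ∈ spinorImage t :=
  ⟨1, by simp, [], by simp, by simp, 1, 1, by simp, by simp, rfl⟩

lemma mul_mem_spinorImage {x y : ℚˣ × SquareClasses} (hx : x ∈ spinorImage t)
    (hy : y ∈ spinorImage t) : x * y ∈ spinorImage t := by
  obtain ⟨P, hP, l, hl, hFl, d, u, hd, hu, rfl⟩ := hx
  obtain ⟨Q, hQ, m, hm, hFm, e, u', he, hu', rfl⟩ := hy
  have hmap : (P * Q).map (Int.cast : ℤ → ℚ) = P.map Int.cast * Q.map Int.cast :=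
    Matrix.map_mul (f := Int.castRingHom ℚ)
  refine ⟨P * Q, ?_, l ++ m, ?_, fun w => ?_, d * e, u * u', ?_, ?_, rfl⟩
  · rw [transpose_mul, show Qᵀ * Pᵀ * gramU t * (P * Q) = Qᵀ * (Pᵀ * gramU t * P) * Q by
      simp only [Matrix.mul_assoc], hP, hQ]
  · simpa only [List.mem_append] using fun v hv => hv.elim (hl v) (hm v)
  · rw [List.map_append, List.foldr_append, List.foldr_comp_eq_comp, Function.comp_apply, hFm,
      hFl, mulVec_mulVec, hmap]
  · rw [Units.val_mul, hd, he, hmap, det_mul]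
  · rw [Units.val_mul, hu, hu', List.map_append, List.prod_append]

lemma inv_eq_self_of_mem_spinorImage (ht : t ≠ 0) {x : ℚˣ × SquareClasses}
    (hx : x ∈ spinorImage t) : x⁻¹ = x := by
  obtain ⟨P, hP, -, -, -, d, u, hd, -, rfl⟩ := hx
  have hdet : P.det ^ 2 = 1 :=
    det_sq_eq_one_of_transpose_mul_mul_self (by simp [gramU, det_fin_two_of, ht]) hP
  have hd2 : d * d = 1 := Units.ext (by
    rw [Units.val_mul, hd, ← Int.cast_det, ← sq, ← Int.cast_pow, hdet, Int.cast_one, Units.val_one])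
  rw [Prod.inv_mk, inv_eq_of_mul_eq_one_right hd2,
    inv_eq_of_mul_eq_one_right (SquareClasses.mk_mul_self u)]

lemma spinorGenerators_subset_spinorImage (ht : t ≠ 0) : spinorGenerators t ⊆ spinorImage t := by
  rintro _ (⟨u, hu, rfl⟩ | ⟨u, hu, rfl⟩)
  · refine ⟨-swapMatrix, (isometry_gramU_iff t ht _).mpr (by simp), [![1, 1]],
      by simp [ratForm_gramU, ht],
      fun w => congrFun (neg_swapMatrix_mulVec_eq_ratReflection ht).symm w,
      -1, u, ?_, by simp [hu, ratForm_gramU]; ring, rfl⟩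
    rw [map_neg_swapMatrix, det_antidiagMatrix (by norm_num), Units.val_neg, Units.val_one]
  · refine ⟨swapMatrix, (isometry_gramU_iff t ht _).mpr (by simp), [![1, -1]],
      by simp [ratForm_gramU, ht],
      fun w => congrFun (swapMatrix_mulVec_eq_ratReflection ht).symm w,
      -1, u, ?_, by simp [hu, ratForm_gramU]; ring, rfl⟩
    rw [map_swapMatrix, det_antidiagMatrix one_ne_zero, Units.val_neg, Units.val_one]

lemma spinorImage_eq_closure (ht : t ≠ 0) :
    spinorImage t = Subgroup.closure (spinorGenerators t) := by
  refine (spinorImage_subset_closure ht).antisymm fun z hz => ?_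
  induction hz using Subgroup.closure_induction with
  | mem x hx => exact spinorGenerators_subset_spinorImage ht hx
  | one => exact one_mem_spinorImage
  | mul x y _ _ hx hy => exact mul_mem_spinorImage hx hy
  | inv x _ hx => rwa [inv_eq_self_of_mem_spinorImage ht hx]

end spinorImage

/-- Let `t ≠ 0` and `U(t)` the lattice with Gram matrix `[[0,t],[t,0]]`.  The
orthogonal group `O(U(t))` is `{±1, ±S}` (`S` the swap matrix), a Klein four-group
`(ℤ/2ℤ)²` generated by the reflections `T(e₁−e₂)` (= `S`) and `T(e₁+e₂)` (= `−S`);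
and the image of `O(U(t))` under `f = det × θ` is the subgroup of
`{±1} × ℚ^×/(ℚ^×)²` generated by `(−1, 2t mod squares)` and `(−1, −2t mod squares)`. -/
theorem orthogonal_group_of_Ut
    (t : ℤ) (ht : t ≠ 0) :
    letI G : Matrix (Fin 2) (Fin 2) ℤ := !![0, t; t, 0]
    letI S : Matrix (Fin 2) (Fin 2) ℤ := !![0, 1; 1, 0]
    letI sq : Subgroup ℚˣ := (powMonoidHom 2 : ℚˣ →* ℚˣ).range
    letI J : Subgroup (ℚˣ × (ℚˣ ⧸ sq)) := Subgroup.closure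
      ({z | ∃ u : ℚˣ, (u : ℚ) = 2 * t ∧ z = ((-1 : ℚˣ), QuotientGroup.mk u)} ∪
       {z | ∃ u : ℚˣ, (u : ℚ) = -(2 * t) ∧ z = ((-1 : ℚˣ), QuotientGroup.mk u)})
    ({P : Matrix (Fin 2) (Fin 2) ℤ | P.transpose * G * P = G} =
      {1, -1, S, -S}) ∧
    (∀ w : Fin 2 → ℚ,
      (S.map (Int.cast : ℤ → ℚ)).mulVec w = ratReflection G ![1, -1] w ∧
      ((-S).map (Int.cast : ℤ → ℚ)).mulVec w = ratReflection G ![1, 1] w) ∧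
    (∀ P : Matrix (Fin 2) (Fin 2) ℤ, P.transpose * G * P = G → P * P = 1) ∧
    ({z : ℚˣ × (ℚˣ ⧸ sq) |
        ∃ P : Matrix (Fin 2) (Fin 2) ℤ, P.transpose * G * P = G ∧
        ∃ l : List (Fin 2 → ℚ), (∀ v ∈ l, ratForm G v v ≠ 0) ∧
          (∀ w, (l.map (ratReflection G)).foldr (· ∘ ·) id w =
            (P.map (Int.cast : ℤ → ℚ)).mulVec w) ∧
          ∃ (d u : ℚˣ), (d : ℚ) = (P.map (Int.cast : ℤ → ℚ)).det ∧
            (u : ℚ) = (l.map fun v => ratForm G v v).prod ∧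
            z = (d, QuotientGroup.mk u)} = (J : Set (ℚˣ × (ℚˣ ⧸ sq)))) := by
  refine ⟨?_, fun w => ⟨?_, ?_⟩, fun P hP => mul_self_eq_one_of_isometry_gramU ht hP,
    spinorImage_eq_closure ht⟩
  · ext P
    exact isometry_gramU_iff t ht P
  · exact congrFun (swapMatrix_mulVec_eq_ratReflection ht) w
  · exact congrFun (neg_swapMatrix_mulVec_eq_ratReflection ht) w
end

section
/- Let L₁ and L₂ be non-degenerate even lattices and γ: (A(L₁), q(L₁)) → (A(L₂), −q(L₂)) an isomorphism of finite quadratic forms. Then Γ_γ = {x ⊕ y ∈ L₁^∨ ⊕ L₂^∨ : γ(x mod L₁) = y mod L₂} is an even unimodular lattice containing L₁ and L₂ as primitive sublattices. -/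
open Matrix

/-- The lattice `ℤⁿ` as a `ℤ`-submodule of `ℚⁿ`. -/
def intLat (n : ℕ) : Submodule ℤ (Fin n → ℚ) where
  carrier := {x | ∀ i, ∃ a : ℤ, (a : ℚ) = x i}
  add_mem' := by
    intro x y hx hy i
    obtain ⟨a, ha⟩ := hx i; obtain ⟨b, hb⟩ := hy i
    exact ⟨a + b, by push_cast; rw [ha, hb]; rfl⟩
  zero_mem' := fun i => ⟨0, by simp⟩
  smul_mem' := by
    intro c x hx i
    obtain ⟨a, ha⟩ := hx i
    exact ⟨c * a, by push_cast; rw [ha]; simp [zsmul_eq_mul]⟩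

/-- The dual lattice `L^∨ = {x : ⟨x, L⟩ ⊆ ℤ}` of the lattice `ℤⁿ` with Gram matrix
`M`, as a `ℤ`-submodule of `ℚⁿ`. -/
noncomputable def dualLat {n : ℕ} (M : Matrix (Fin n) (Fin n) ℤ) :
    Submodule ℤ (Fin n → ℚ) :=
  Submodule.comap
    ((Matrix.mulVecLin (M.map (Int.cast : ℤ → ℚ))).restrictScalars ℤ) (intLat n)

/-- The discriminant group `A(L) = L^∨/L` of the lattice `ℤⁿ` with Gram matrix `M`. -/
noncomputable abbrev discGroup {n : ℕ} (M : Matrix (Fin n) (Fin n) ℤ) :=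
  (dualLat M) ⧸ (Submodule.comap (dualLat M).subtype (intLat n))

/-- The class of `x ∈ L^∨` in `A(L)`. -/
noncomputable def discMk {n : ℕ} (M : Matrix (Fin n) (Fin n) ℤ) (x : dualLat M) :
    discGroup M := Submodule.Quotient.mk x

namespace GluingAux

variable {n : ℕ} {M : Matrix (Fin n) (Fin n) ℤ}

lemma mem_intLat {x : Fin n → ℚ} : x ∈ intLat n ↔ ∀ i, ∃ a : ℤ, (a : ℚ) = x i := Iff.rfl

lemma mem_dualLat {x : Fin n → ℚ} :
    x ∈ dualLat M ↔ (M.map (Int.cast : ℤ → ℚ)).mulVec x ∈ intLat n := Iff.rfl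

lemma ratForm_add_left (x x' y : Fin n → ℚ) :
    ratForm M (x + x') y = ratForm M x y + ratForm M x' y := by
  simp [ratForm, add_dotProduct]

lemma ratForm_add_right (x y y' : Fin n → ℚ) :
    ratForm M x (y + y') = ratForm M x y + ratForm M x y' := by
  simp [ratForm, Matrix.mulVec_add, dotProduct_add]

lemma ratForm_sub_left (x x' y : Fin n → ℚ) :
    ratForm M (x - x') y = ratForm M x y - ratForm M x' y := by
  simp [ratForm, sub_dotProduct]

lemma ratForm_zero_right (x : Fin n → ℚ) : ratForm M x 0 = 0 := by
  simp [ratForm]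

lemma ratForm_symm (hs : M.transpose = M) (x y : Fin n → ℚ) :
    ratForm M x y = ratForm M y x := by
  unfold ratForm
  rw [Matrix.dotProduct_mulVec, ← Matrix.mulVec_transpose, ← Matrix.transpose_map, hs,
    dotProduct_comm]

lemma single_mem_intLat (i : Fin n) : (Pi.single i 1 : Fin n → ℚ) ∈ intLat n := by
  intro j
  refine ⟨if j = i then 1 else 0, ?_⟩
  rw [Pi.single_apply]
  split <;> simp

lemma ratForm_single (hs : M.transpose = M) (x : Fin n → ℚ) (i : Fin n) :
    ratForm M x (Pi.single i 1) = (M.map (Int.cast : ℤ → ℚ)).mulVec x i := by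
  rw [ratForm_symm hs]
  unfold ratForm
  rw [single_dotProduct, one_mul]

lemma intLat_le_dualLat : intLat n ≤ dualLat M := by
  intro a ha
  rw [mem_dualLat]
  intro i
  choose c hc using ha
  refine ⟨∑ j, M i j * c j, ?_⟩
  simp only [Matrix.mulVec, dotProduct, Matrix.map_apply]
  push_cast
  exact Finset.sum_congr rfl fun j _ => by rw [hc]

lemma intLat_of_pairing (hd : M.det ≠ 0)
    {t : Fin n → ℚ} (h : ∀ u, u ∈ dualLat M → ∃ c : ℤ, (c : ℚ) = ratForm M t u) :
    t ∈ intLat n := by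
  set A := M.map (Int.cast : ℤ → ℚ) with hA
  have hdet : A.det = (M.det : ℚ) := ((RingHom.map_det (Int.castRingHom ℚ) M).symm)
  have hAdet : IsUnit A.det := by
    rw [isUnit_iff_ne_zero, hdet]
    exact_mod_cast hd
  intro i
  set u := A⁻¹.mulVec (Pi.single i 1) with hu
  have hmul : A.mulVec u = Pi.single i 1 := by
    rw [hu, Matrix.mulVec_mulVec, Matrix.mul_nonsing_inv A hAdet, Matrix.one_mulVec]
  have humem : u ∈ dualLat M := by
    rw [mem_dualLat, ← hA, hmul]
    exact single_mem_intLat i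
  obtain ⟨c, hc⟩ := h u humem
  refine ⟨c, ?_⟩
  rw [hc]
  unfold ratForm
  rw [← hA, hmul, dotProduct_single, mul_one]

lemma discMk_add (x y : dualLat M) : discMk M (x + y) = discMk M x + discMk M y :=
  Submodule.Quotient.mk_add _

lemma discMk_eq_iff (x y : dualLat M) :
    discMk M x = discMk M y ↔ (x : Fin n → ℚ) - y ∈ intLat n := by
  unfold discMk
  rw [Submodule.Quotient.eq]
  simp [Submodule.mem_comap]

lemma discMk_eq_zero (x : dualLat M) :
    discMk M x = 0 ↔ (x : Fin n → ℚ) ∈ intLat n := by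
  unfold discMk
  rw [Submodule.Quotient.mk_eq_zero]
  simp [Submodule.mem_comap]

lemma discMk_sub (x y : dualLat M) : discMk M (x - y) = discMk M x - discMk M y :=
  Submodule.Quotient.mk_sub _

end GluingAux

namespace GluingAux

variable {n₁ n₂ : ℕ} {M₁ : Matrix (Fin n₁) (Fin n₁) ℤ} {M₂ : Matrix (Fin n₂) (Fin n₂) ℤ}

lemma even_of_glue (γ : discGroup M₁ ≃+ discGroup M₂)
    (hγq : ∀ (x : dualLat M₁) (y : dualLat M₂), γ (discMk M₁ x) = discMk M₂ y →
      ((ratForm M₁ x x : ℚ) : AddCircle (2 : ℚ)) =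
        -((ratForm M₂ y y : ℚ) : AddCircle (2 : ℚ)))
    (x : dualLat M₁) (y : dualLat M₂)
    (h : γ (discMk M₁ x) = discMk M₂ y) :
    ∃ k : ℤ, ratForm M₁ x x + ratForm M₂ y y = 2 * (k : ℚ) := by
  have h1 := hγq x y h
  rw [eq_neg_iff_add_eq_zero, ← AddCircle.coe_add, AddCircle.coe_eq_zero_iff] at h1
  obtain ⟨k, hk⟩ := h1
  exact ⟨k, by rw [← hk, zsmul_eq_mul]; ring⟩

lemma pair_int (hs₁ : M₁.transpose = M₁) (hs₂ : M₂.transpose = M₂)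
    (γ : discGroup M₁ ≃+ discGroup M₂)
    (hγq : ∀ (x : dualLat M₁) (y : dualLat M₂), γ (discMk M₁ x) = discMk M₂ y →
      ((ratForm M₁ x x : ℚ) : AddCircle (2 : ℚ)) =
        -((ratForm M₂ y y : ℚ) : AddCircle (2 : ℚ)))
    (x x' : dualLat M₁) (y y' : dualLat M₂)
    (h : γ (discMk M₁ x) = discMk M₂ y) (h' : γ (discMk M₁ x') = discMk M₂ y') :
    ∃ c : ℤ, (c : ℚ) = ratForm M₁ x x' + ratForm M₂ y y' := by
  obtain ⟨k1, hk1⟩ := even_of_glue γ hγq x y h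
  obtain ⟨k2, hk2⟩ := even_of_glue γ hγq x' y' h'
  have hsum : γ (discMk M₁ (x + x')) = discMk M₂ (y + y') := by
    rw [discMk_add, discMk_add, map_add, h, h']
  obtain ⟨k3, hk3⟩ := even_of_glue γ hγq _ _ hsum
  refine ⟨k3 - k1 - k2, ?_⟩
  have e1 : ratForm M₁ (↑(x + x')) (↑(x + x')) =
      ratForm M₁ x x + 2 * ratForm M₁ x x' + ratForm M₁ x' x' := by
    rw [Submodule.coe_add, ratForm_add_left, ratForm_add_right, ratForm_add_right,
      ratForm_symm hs₁ (x' : Fin n₁ → ℚ) x]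
    ring
  have e2 : ratForm M₂ (↑(y + y')) (↑(y + y')) =
      ratForm M₂ y y + 2 * ratForm M₂ y y' + ratForm M₂ y' y' := by
    rw [Submodule.coe_add, ratForm_add_left, ratForm_add_right, ratForm_add_right,
      ratForm_symm hs₂ (y' : Fin n₂ → ℚ) y]
    ring
  rw [e1, e2] at hk3
  push_cast
  linarith

end GluingAux

/-- Nikulin's gluing construction.  Let `L₁, L₂` be non-degenerate even lattices
(with Gram matrices `M₁, M₂`) and `γ : (A(L₁), q(L₁)) ≃ (A(L₂), −q(L₂))` an
isomorphism of finite quadratic forms.  Then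
`Γ_γ = {x ⊕ y ∈ L₁^∨ ⊕ L₂^∨ : γ(x mod L₁) = y mod L₂}` is an even unimodular
lattice containing `L₁` and `L₂` as primitive sublattices. -/
theorem gluing_is_even_unimodular_overlattice
    {n₁ n₂ : ℕ} (M₁ : Matrix (Fin n₁) (Fin n₁) ℤ) (M₂ : Matrix (Fin n₂) (Fin n₂) ℤ)
    (hs₁ : M₁.transpose = M₁) (hs₂ : M₂.transpose = M₂)
    (hd₁ : M₁.det ≠ 0) (hd₂ : M₂.det ≠ 0)
    (he₁ : ∀ i, Even (M₁ i i)) (he₂ : ∀ i, Even (M₂ i i))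
    (γ : discGroup M₁ ≃+ discGroup M₂)
    (hγq : ∀ (x : dualLat M₁) (y : dualLat M₂), γ (discMk M₁ x) = discMk M₂ y →
      ((ratForm M₁ x x : ℚ) : AddCircle (2 : ℚ)) =
        -((ratForm M₂ y y : ℚ) : AddCircle (2 : ℚ))) :
    letI Γγ : Set ((Fin n₁ → ℚ) × (Fin n₂ → ℚ)) :=
      {z | ∃ (h1 : z.1 ∈ dualLat M₁) (h2 : z.2 ∈ dualLat M₂),
        γ (discMk M₁ ⟨z.1, h1⟩) = discMk M₂ ⟨z.2, h2⟩}
    letI φ : ((Fin n₁ → ℚ) × (Fin n₂ → ℚ)) → ((Fin n₁ → ℚ) × (Fin n₂ → ℚ)) → ℚ :=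
      fun z w => ratForm M₁ z.1 w.1 + ratForm M₂ z.2 w.2
    letI L₁emb : Set ((Fin n₁ → ℚ) × (Fin n₂ → ℚ)) :=
      {z | z.1 ∈ intLat n₁ ∧ z.2 = 0}
    letI L₂emb : Set ((Fin n₁ → ℚ) × (Fin n₂ → ℚ)) :=
      {z | z.1 = 0 ∧ z.2 ∈ intLat n₂}
    -- Γ_γ is a subgroup (a lattice):
    ((0 : (Fin n₁ → ℚ) × (Fin n₂ → ℚ)) ∈ Γγ ∧ ∀ z ∈ Γγ, ∀ w ∈ Γγ, z - w ∈ Γγ) ∧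
    -- it is integral and even:
    (∀ z ∈ Γγ, ∀ w ∈ Γγ, ∃ c : ℤ, (c : ℚ) = φ z w) ∧
    (∀ z ∈ Γγ, ∃ k : ℤ, φ z z = 2 * (k : ℚ)) ∧
    -- it is unimodular (self-dual):
    ({z | ∀ w ∈ Γγ, ∃ c : ℤ, (c : ℚ) = φ z w} = Γγ) ∧
    -- it contains L₁ and L₂ primitively:
    (L₁emb ⊆ Γγ ∧ ∀ z ∈ Γγ, (∃ k : ℤ, k ≠ 0 ∧ k • z ∈ L₁emb) → z ∈ L₁emb) ∧
    (L₂emb ⊆ Γγ ∧ ∀ z ∈ Γγ, (∃ k : ℤ, k ≠ 0 ∧ k • z ∈ L₂emb) → z ∈ L₂emb) := by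
  set Γγ : Set ((Fin n₁ → ℚ) × (Fin n₂ → ℚ)) :=
    {z | ∃ (h1 : z.1 ∈ dualLat M₁) (h2 : z.2 ∈ dualLat M₂),
      γ (discMk M₁ ⟨z.1, h1⟩) = discMk M₂ ⟨z.2, h2⟩} with hΓdef
  set φ : ((Fin n₁ → ℚ) × (Fin n₂ → ℚ)) → ((Fin n₁ → ℚ) × (Fin n₂ → ℚ)) → ℚ :=
    fun z w => ratForm M₁ z.1 w.1 + ratForm M₂ z.2 w.2 with hφdef
  set L₁emb : Set ((Fin n₁ → ℚ) × (Fin n₂ → ℚ)) :=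
    {z | z.1 ∈ intLat n₁ ∧ z.2 = 0} with hL1def
  set L₂emb : Set ((Fin n₁ → ℚ) × (Fin n₂ → ℚ)) :=
    {z | z.1 = 0 ∧ z.2 ∈ intLat n₂} with hL2def
  have hmem : ∀ z : (Fin n₁ → ℚ) × (Fin n₂ → ℚ), z ∈ Γγ ↔
      ∃ (h1 : z.1 ∈ dualLat M₁) (h2 : z.2 ∈ dualLat M₂),
        γ (discMk M₁ ⟨z.1, h1⟩) = discMk M₂ ⟨z.2, h2⟩ := fun z => Iff.rfl
  have hφ : ∀ z w : (Fin n₁ → ℚ) × (Fin n₂ → ℚ),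
      φ z w = ratForm M₁ z.1 w.1 + ratForm M₂ z.2 w.2 := fun _ _ => rfl
  have hm1 : ∀ z : (Fin n₁ → ℚ) × (Fin n₂ → ℚ),
      z ∈ L₁emb ↔ z.1 ∈ intLat n₁ ∧ z.2 = 0 := fun z => Iff.rfl
  have hm2 : ∀ z : (Fin n₁ → ℚ) × (Fin n₂ → ℚ),
      z ∈ L₂emb ↔ z.1 = 0 ∧ z.2 ∈ intLat n₂ := fun z => Iff.rfl
  -- integrality of the pairing on Γγ
  have key : ∀ z ∈ Γγ, ∀ w ∈ Γγ, ∃ c : ℤ, (c : ℚ) = φ z w := by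
    intro z hz w hw
    rw [hmem] at hz hw
    obtain ⟨h1, h2, hγz⟩ := hz
    obtain ⟨g1, g2, hγw⟩ := hw
    rw [hφ]
    exact GluingAux.pair_int hs₁ hs₂ γ hγq ⟨z.1, h1⟩ ⟨w.1, g1⟩ ⟨z.2, h2⟩ ⟨w.2, g2⟩ hγz hγw
  -- L₁ and L₂ are contained in Γγ
  have hL1 : L₁emb ⊆ Γγ := by
    intro z hz
    rw [hm1] at hz
    obtain ⟨hz1, hz2⟩ := hz
    have h1 : z.1 ∈ dualLat M₁ := GluingAux.intLat_le_dualLat hz1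
    have h2 : z.2 ∈ dualLat M₂ := by rw [hz2]; exact Submodule.zero_mem _
    rw [hmem]
    refine ⟨h1, h2, ?_⟩
    have e1 : discMk M₁ ⟨z.1, h1⟩ = 0 := (GluingAux.discMk_eq_zero _).mpr hz1
    have e2 : discMk M₂ ⟨z.2, h2⟩ = 0 :=
      (GluingAux.discMk_eq_zero _).mpr (by show z.2 ∈ intLat n₂; rw [hz2]; exact Submodule.zero_mem _)
    rw [e1, e2, map_zero]
  have hL2 : L₂emb ⊆ Γγ := by
    intro z hz
    rw [hm2] at hz
    obtain ⟨hz1, hz2⟩ := hz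
    have h1 : z.1 ∈ dualLat M₁ := by rw [hz1]; exact Submodule.zero_mem _
    have h2 : z.2 ∈ dualLat M₂ := GluingAux.intLat_le_dualLat hz2
    rw [hmem]
    refine ⟨h1, h2, ?_⟩
    have e1 : discMk M₁ ⟨z.1, h1⟩ = 0 :=
      (GluingAux.discMk_eq_zero _).mpr (by show z.1 ∈ intLat n₁; rw [hz1]; exact Submodule.zero_mem _)
    have e2 : discMk M₂ ⟨z.2, h2⟩ = 0 := (GluingAux.discMk_eq_zero _).mpr hz2
    rw [e1, e2, map_zero]
  refine ⟨⟨?_, ?_⟩, key, ?_, ?_, ⟨hL1, ?_⟩, ⟨hL2, ?_⟩⟩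
  · -- 0 ∈ Γγ
    exact hL1 ((hm1 0).mpr ⟨Submodule.zero_mem _, rfl⟩)
  · -- closed under subtraction
    intro z hz w hw
    rw [hmem] at hz hw ⊢
    obtain ⟨h1, h2, hγz⟩ := hz
    obtain ⟨g1, g2, hγw⟩ := hw
    have s1 : (z - w).1 ∈ dualLat M₁ := Submodule.sub_mem _ h1 g1
    have s2 : (z - w).2 ∈ dualLat M₂ := Submodule.sub_mem _ h2 g2
    refine ⟨s1, s2, ?_⟩
    have e1 : (⟨(z - w).1, s1⟩ : dualLat M₁) = ⟨z.1, h1⟩ - ⟨w.1, g1⟩ := rfl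
    have e2 : (⟨(z - w).2, s2⟩ : dualLat M₂) = ⟨z.2, h2⟩ - ⟨w.2, g2⟩ := rfl
    rw [e1, e2, GluingAux.discMk_sub, GluingAux.discMk_sub, map_sub, hγz, hγw]
  · -- evenness
    intro z hz
    rw [hmem] at hz
    obtain ⟨h1, h2, hγz⟩ := hz
    obtain ⟨k, hk⟩ := GluingAux.even_of_glue γ hγq ⟨z.1, h1⟩ ⟨z.2, h2⟩ hγz
    exact ⟨k, by rw [hφ]; exact hk⟩
  · -- unimodularity
    apply Set.Subset.antisymm
    · intro z hz
      have hz' : ∀ w ∈ Γγ, ∃ c : ℤ, (c : ℚ) = φ z w := hz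
      have hx : z.1 ∈ dualLat M₁ := by
        rw [GluingAux.mem_dualLat]
        intro i
        have hwmem : ((Pi.single i 1 : Fin n₁ → ℚ), (0 : Fin n₂ → ℚ)) ∈ Γγ :=
          hL1 ((hm1 _).mpr ⟨GluingAux.single_mem_intLat i, rfl⟩)
        obtain ⟨c, hc⟩ := hz' _ hwmem
        refine ⟨c, ?_⟩
        rw [hc, hφ]
        show ratForm M₁ z.1 (Pi.single i 1) + ratForm M₂ z.2 0 = _
        rw [GluingAux.ratForm_zero_right, add_zero, GluingAux.ratForm_single hs₁]
      have hy : z.2 ∈ dualLat M₂ := by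
        rw [GluingAux.mem_dualLat]
        intro i
        have hwmem : ((0 : Fin n₁ → ℚ), (Pi.single i 1 : Fin n₂ → ℚ)) ∈ Γγ :=
          hL2 ((hm2 _).mpr ⟨rfl, GluingAux.single_mem_intLat i⟩)
        obtain ⟨c, hc⟩ := hz' _ hwmem
        refine ⟨c, ?_⟩
        rw [hc, hφ]
        show ratForm M₁ z.1 0 + ratForm M₂ z.2 (Pi.single i 1) = _
        rw [GluingAux.ratForm_zero_right, zero_add, GluingAux.ratForm_single hs₂]
      obtain ⟨y₀, hy₀⟩ := Submodule.Quotient.mk_surjective _ (γ (discMk M₁ ⟨z.1, hx⟩))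
      have hz0 : γ (discMk M₁ ⟨z.1, hx⟩) = discMk M₂ y₀ := hy₀.symm
      have hdiff : ∀ u, u ∈ dualLat M₂ →
          ∃ c : ℤ, (c : ℚ) = ratForm M₂ (z.2 - ↑y₀) u := by
        intro u hu
        obtain ⟨v, hv⟩ := Submodule.Quotient.mk_surjective _ (γ.symm (discMk M₂ ⟨u, hu⟩))
        have hγv : γ (discMk M₁ v) = discMk M₂ ⟨u, hu⟩ := by
          rw [show discMk M₁ v = γ.symm (discMk M₂ ⟨u, hu⟩) from hv,
            AddEquiv.apply_symm_apply]
        have hwmem : (((v : Fin n₁ → ℚ)), u) ∈ Γγ := by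
          rw [hmem]
          exact ⟨v.2, hu, hγv⟩
        obtain ⟨c₁, hc₁⟩ := hz' _ hwmem
        obtain ⟨c₂, hc₂⟩ :=
          GluingAux.pair_int hs₁ hs₂ γ hγq ⟨z.1, hx⟩ v y₀ ⟨u, hu⟩ hz0 hγv
        rw [hφ] at hc₁
        refine ⟨c₁ - c₂, ?_⟩
        rw [GluingAux.ratForm_sub_left]
        push_cast
        linarith [hc₁, hc₂]
      have hyy : z.2 - ↑y₀ ∈ intLat n₂ := GluingAux.intLat_of_pairing hd₂ hdiff
      rw [hmem]
      refine ⟨hx, hy, ?_⟩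
      rw [hz0]
      symm
      rw [GluingAux.discMk_eq_iff]
      exact hyy
    · intro z hz
      exact fun w hw => key z hz w hw
  · -- primitivity of L₁
    intro z hz hex
    obtain ⟨k, hk0, hkz⟩ := hex
    rw [hm1] at hkz
    have h2 : z.2 = 0 := by
      have hk : k • z.2 = 0 := hkz.2
      rcases smul_eq_zero.mp hk with h | h
      · exact absurd h hk0
      · exact h
    rw [hmem] at hz
    obtain ⟨h1, hh2, hγz⟩ := hz
    have e2 : discMk M₂ ⟨z.2, hh2⟩ = 0 :=
      (GluingAux.discMk_eq_zero _).mpr (by show z.2 ∈ intLat n₂; rw [h2]; exact Submodule.zero_mem _)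
    rw [e2] at hγz
    have e1 : discMk M₁ ⟨z.1, h1⟩ = 0 := by
      apply γ.injective
      rw [hγz, map_zero]
    exact (hm1 z).mpr ⟨(GluingAux.discMk_eq_zero _).mp e1, h2⟩
  · -- primitivity of L₂
    intro z hz hex
    obtain ⟨k, hk0, hkz⟩ := hex
    rw [hm2] at hkz
    have h1z : z.1 = 0 := by
      have hk : k • z.1 = 0 := hkz.1
      rcases smul_eq_zero.mp hk with h | h
      · exact absurd h hk0
      · exact h
    rw [hmem] at hz
    obtain ⟨hh1, h2, hγz⟩ := hz
    have e1 : discMk M₁ ⟨z.1, hh1⟩ = 0 :=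
      (GluingAux.discMk_eq_zero _).mpr (by show z.1 ∈ intLat n₁; rw [h1z]; exact Submodule.zero_mem _)
    rw [e1, map_zero] at hγz
    have e2 : discMk M₂ ⟨z.2, h2⟩ = 0 := hγz.symm
    exact (hm2 z).mpr ⟨h1z, (GluingAux.discMk_eq_zero _).mp e2⟩
end
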